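/- Let H be a complex Hilbert space with norm ‖·‖ and inner product ⟨·,·⟩, and let v₁, v₂ ∈ H be nonzero vectors (not necessarily distinct) with ‖v₁‖ = ‖v₂‖. Let J = {x ∈ H : |⟨x,v₁⟩| ≥ 1 and |⟨x,v₂⟩| ≥ 1}. Then the infimum of ‖x‖ over x ∈ J is attained and equals (2/(‖v₁‖² + |⟨v₁,v₂⟩|))^{1/2}. Moreover, if ⟨v₁,v₂⟩ ≠ 0 and we write ⟨v₁,v₂⟩ = e^{−iα}|⟨v₁,v₂⟩|, then every minimizer has the form y = (2/(‖v₁‖² + |⟨v₁,v₂⟩|))^{1/2}·c·(e^{iα}v₁ + v₂)/‖e^{iα}v₁ + v₂‖ with |c| = 1. -/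

import Mathlib

/-!
For `x` in the constraint set, let `u = ε₁ • v₁ + ε₂ • v₂` with unimodular `εᵢ` chosen so that
`⟪u, x⟫ = ‖⟪v₁, x⟫‖ + ‖⟪v₂, x⟫‖ ≥ 2`. Since `‖v₁‖ = ‖v₂‖`, expanding the square gives
`‖u‖² ≤ 2 (‖v₁‖² + ‖⟪v₁, v₂⟫‖)`, and Cauchy–Schwarz `2 ≤ ‖u‖ ‖x‖` yields the lower bound.
It is attained at a multiple of `w = e^{iα} • v₁ + v₂`, where `e^{iα}` is the phase of `⟪v₁, v₂⟫`.
For a minimizer every inequality is an equality: equality in the expansion forces `u ∥ w`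
(when `⟪v₁, v₂⟫ ≠ 0`), and equality in Cauchy–Schwarz forces `x ∥ u`.
-/

open scoped InnerProductSpace ComplexConjugate

-- `arg 0 = 0`, so `phase 0 = 1` and `phase z` is unimodular for every `z`.
noncomputable def phase (z : ℂ) : ℂ := Complex.exp (z.arg * Complex.I)

lemma norm_phase (z : ℂ) : ‖phase z‖ = 1 := Complex.norm_exp_ofReal_mul_I _

lemma norm_mul_phase (z : ℂ) : (‖z‖ : ℂ) * phase z = z := Complex.norm_mul_exp_arg_mul_I z

lemma conj_phase_mul_self (z : ℂ) : conj (phase z) * z = ‖z‖ := by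
  nth_rw 2 [← norm_mul_phase z]
  rw [mul_left_comm, ← Complex.normSq_eq_conj_mul_self, Complex.normSq_eq_norm_sq, norm_phase]
  simp

open scoped ComplexOrder in
lemma Complex.eq_one_of_norm_eq_one_of_re_eq_one {z : ℂ} (hnorm : ‖z‖ = 1) (hre : z.re = 1) :
    z = 1 := by
  have hz : 0 ≤ z := Complex.re_eq_norm.mp (hre.trans hnorm.symm)
  calc z = z.re := Complex.eq_re_of_ofReal_le (r := 0) (by simpa using hz)
    _ = 1 := by rw [hre, Complex.ofReal_one]

lemma exists_norm_eq_one_smul_eq_norm_div_norm_smul {E : Type*} [NormedAddCommGroup E]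
    [NormedSpace ℂ E] (d : ℂ) (w : E) :
    ∃ c : ℂ, ‖c‖ = 1 ∧ d • w = (((‖d • w‖ / ‖w‖ : ℝ) : ℂ) * c) • w := by
  rcases eq_or_ne w 0 with rfl | hw
  · exact ⟨1, norm_one, by simp⟩
  refine ⟨phase d, norm_phase d, ?_⟩
  rw [norm_smul, mul_div_cancel_right₀ _ (norm_ne_zero_iff.mpr hw), norm_mul_phase]

section

variable {H : Type*} [NormedAddCommGroup H] [InnerProductSpace ℂ H] {v₁ v₂ : H}

lemma norm_smul_add_smul_sq (hnorm : ‖v₁‖ = ‖v₂‖) {c₁ c₂ : ℂ} (hc₁ : ‖c₁‖ = 1)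
    (hc₂ : ‖c₂‖ = 1) :
    ‖c₁ • v₁ + c₂ • v₂‖ ^ 2 = 2 * ‖v₁‖ ^ 2 + 2 * (conj c₁ * c₂ * ⟪v₁, v₂⟫_ℂ).re := by
  rw [@norm_add_sq ℂ, inner_smul_left, inner_smul_right, norm_smul, norm_smul, hc₁, hc₂, ← hnorm,
    ← mul_assoc, RCLike.re_to_complex]
  ring

lemma norm_smul_add_smul_sq_le (hnorm : ‖v₁‖ = ‖v₂‖) {c₁ c₂ : ℂ} (hc₁ : ‖c₁‖ = 1)
    (hc₂ : ‖c₂‖ = 1) : ‖c₁ • v₁ + c₂ • v₂‖ ^ 2 ≤ 2 * (‖v₁‖ ^ 2 + ‖⟪v₁, v₂⟫_ℂ‖) := by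
  have hre : (conj c₁ * c₂ * ⟪v₁, v₂⟫_ℂ).re ≤ ‖⟪v₁, v₂⟫_ℂ‖ :=
    calc _ ≤ ‖conj c₁ * c₂ * ⟪v₁, v₂⟫_ℂ‖ := Complex.re_le_norm _
      _ = ‖⟪v₁, v₂⟫_ℂ‖ := by simp [hc₁, hc₂]
  rw [norm_smul_add_smul_sq hnorm hc₁ hc₂]
  linarith

lemma smul_add_smul_eq_smul_of_norm_sq_eq (hnorm : ‖v₁‖ = ‖v₂‖) {c₁ c₂ φ : ℂ} {m : ℝ}
    (hc₁ : ‖c₁‖ = 1) (hc₂ : ‖c₂‖ = 1) (hφ : ‖φ‖ = 1) (hv : ⟪v₁, v₂⟫_ℂ = φ * m) (hm : m ≠ 0)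
    (h : ‖c₁ • v₁ + c₂ • v₂‖ ^ 2 = 2 * (‖v₁‖ ^ 2 + m)) :
    c₁ • v₁ + c₂ • v₂ = c₂ • (φ • v₁ + v₂) := by
  have hz : conj c₁ * c₂ * φ = 1 := by
    refine Complex.eq_one_of_norm_eq_one_of_re_eq_one (by simp [hc₁, hc₂, hφ]) ?_
    rw [norm_smul_add_smul_sq hnorm hc₁ hc₂, hv, ← mul_assoc, Complex.re_mul_ofReal] at h
    exact mul_right_cancel₀ hm (by linarith)
  have hc : c₁ = c₂ * φ :=
    calc c₁ = c₁ * (conj c₁ * c₂ * φ) := by rw [hz, mul_one]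
      _ = c₁ * conj c₁ * (c₂ * φ) := by ring
      _ = c₂ * φ := by rw [Complex.mul_conj, Complex.normSq_eq_norm_sq, hc₁]; simp
  rw [hc, smul_add, mul_smul]

lemma inner_fst_smul_add_of_inner_eq {φ : ℂ} {m : ℝ} (hv : ⟪v₁, v₂⟫_ℂ = φ * m) :
    ⟪v₁, φ • v₁ + v₂⟫_ℂ = φ * (‖v₁‖ ^ 2 + m : ℝ) := by
  rw [inner_add_right, inner_smul_right, inner_self_eq_norm_sq_to_K, hv,
    RCLike.ofReal_eq_complex_ofReal]
  push_cast
  ring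

lemma inner_snd_smul_add_of_inner_eq (hnorm : ‖v₁‖ = ‖v₂‖) {φ : ℂ} (hφ : ‖φ‖ = 1)
    {m : ℝ} (hv : ⟪v₁, v₂⟫_ℂ = φ * m) :
    ⟪v₂, φ • v₁ + v₂⟫_ℂ = (‖v₁‖ ^ 2 + m : ℝ) := by
  rw [inner_add_right, inner_smul_right, inner_self_eq_norm_sq_to_K, ← inner_conj_symm, hv,
    map_mul, Complex.conj_ofReal, ← mul_assoc, Complex.mul_conj, Complex.normSq_eq_norm_sq, hφ,
    ← hnorm, RCLike.ofReal_eq_complex_ofReal]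
  push_cast
  ring

lemma norm_smul_add_sq_of_inner_eq (hnorm : ‖v₁‖ = ‖v₂‖) {φ : ℂ} (hφ : ‖φ‖ = 1)
    {m : ℝ} (hv : ⟪v₁, v₂⟫_ℂ = φ * m) :
    ‖φ • v₁ + v₂‖ ^ 2 = 2 * (‖v₁‖ ^ 2 + m) := by
  have h := norm_smul_add_smul_sq hnorm hφ norm_one
  rw [one_smul] at h
  rw [h, mul_one, hv, ← mul_assoc, Complex.conj_mul', hφ]
  simp only [Complex.ofReal_one, one_pow, one_mul, Complex.ofReal_re]
  ring

lemma inner_phase_smul_add_phase_smul (x : H) :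
    ⟪phase ⟪v₁, x⟫_ℂ • v₁ + phase ⟪v₂, x⟫_ℂ • v₂, x⟫_ℂ = (‖⟪v₁, x⟫_ℂ‖ + ‖⟪v₂, x⟫_ℂ‖ : ℝ) := by
  rw [inner_add_left, inner_smul_left, inner_smul_left, conj_phase_mul_self, conj_phase_mul_self]
  push_cast
  rfl

lemma norm_inner_add_norm_inner_le (x : H) :
    ‖⟪v₁, x⟫_ℂ‖ + ‖⟪v₂, x⟫_ℂ‖ ≤ ‖phase ⟪v₁, x⟫_ℂ • v₁ + phase ⟪v₂, x⟫_ℂ • v₂‖ * ‖x‖ := by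
  have h := norm_inner_le_norm (𝕜 := ℂ) (phase ⟪v₁, x⟫_ℂ • v₁ + phase ⟪v₂, x⟫_ℂ • v₂) x
  rwa [inner_phase_smul_add_phase_smul, Complex.norm_real, Real.norm_of_nonneg (by positivity)]
    at h

lemma sqrt_two_div_le_norm (hnorm : ‖v₁‖ = ‖v₂‖) (hv₁ : v₁ ≠ 0) {x : H}
    (h₁ : 1 ≤ ‖⟪v₁, x⟫_ℂ‖) (h₂ : 1 ≤ ‖⟪v₂, x⟫_ℂ‖) :
    √(2 / (‖v₁‖ ^ 2 + ‖⟪v₁, v₂⟫_ℂ‖)) ≤ ‖x‖ := by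
  set u := phase ⟪v₁, x⟫_ℂ • v₁ + phase ⟪v₂, x⟫_ℂ • v₂
  have hS : 0 < ‖v₁‖ ^ 2 + ‖⟪v₁, v₂⟫_ℂ‖ := by positivity
  have hu : ‖u‖ ^ 2 ≤ 2 * (‖v₁‖ ^ 2 + ‖⟪v₁, v₂⟫_ℂ‖) :=
    norm_smul_add_smul_sq_le hnorm (norm_phase _) (norm_phase _)
  have hux : 2 ≤ ‖u‖ * ‖x‖ := by linarith [norm_inner_add_norm_inner_le (v₁ := v₁) (v₂ := v₂) x]
  rw [Real.sqrt_le_left (norm_nonneg x), div_le_iff₀ hS]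
  nlinarith [mul_le_mul_of_nonneg_right hu (sq_nonneg ‖x‖)]

lemma exists_one_le_norm_inner_and_norm_eq (hnorm : ‖v₁‖ = ‖v₂‖) (hv₁ : v₁ ≠ 0) :
    ∃ x : H, 1 ≤ ‖⟪v₁, x⟫_ℂ‖ ∧ 1 ≤ ‖⟪v₂, x⟫_ℂ‖ ∧
      ‖x‖ = √(2 / (‖v₁‖ ^ 2 + ‖⟪v₁, v₂⟫_ℂ‖)) := by
  have hv : ⟪v₁, v₂⟫_ℂ = phase ⟪v₁, v₂⟫_ℂ * ‖⟪v₁, v₂⟫_ℂ‖ := by rw [mul_comm, norm_mul_phase]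
  have hw := norm_smul_add_sq_of_inner_eq hnorm (norm_phase _) hv
  set S := ‖v₁‖ ^ 2 + ‖⟪v₁, v₂⟫_ℂ‖
  have hS : 0 < S := by positivity
  refine ⟨(S : ℂ)⁻¹ • (phase ⟪v₁, v₂⟫_ℂ • v₁ + v₂), ?_, ?_, ?_⟩
  · rw [inner_smul_right, inner_fst_smul_add_of_inner_eq hv, norm_mul, norm_mul, norm_inv,
      norm_phase, Complex.norm_real, Real.norm_of_nonneg hS.le, one_mul, inv_mul_cancel₀ hS.ne']
  · rw [inner_smul_right, inner_snd_smul_add_of_inner_eq hnorm (norm_phase _) hv, norm_mul,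
      norm_inv, Complex.norm_real, Real.norm_of_nonneg hS.le, inv_mul_cancel₀ hS.ne']
  · rw [← Real.sqrt_sq (norm_nonneg _), norm_smul, mul_pow, hw, norm_inv, Complex.norm_real,
      Real.norm_of_nonneg hS.le]
    field_simp

lemma exists_eq_smul_of_norm_sq_eq (hnorm : ‖v₁‖ = ‖v₂‖) {φ : ℂ} (hφ : ‖φ‖ = 1)
    (hv : ⟪v₁, v₂⟫_ℂ = φ * ‖⟪v₁, v₂⟫_ℂ‖) (hv₀ : ⟪v₁, v₂⟫_ℂ ≠ 0) {y : H}
    (h₁ : 1 ≤ ‖⟪v₁, y⟫_ℂ‖) (h₂ : 1 ≤ ‖⟪v₂, y⟫_ℂ‖)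
    (hy : ‖y‖ ^ 2 = 2 / (‖v₁‖ ^ 2 + ‖⟪v₁, v₂⟫_ℂ‖)) :
    ∃ d : ℂ, y = d • (φ • v₁ + v₂) := by
  have hm : ‖⟪v₁, v₂⟫_ℂ‖ ≠ 0 := norm_ne_zero_iff.mpr hv₀
  set S := ‖v₁‖ ^ 2 + ‖⟪v₁, v₂⟫_ℂ‖
  have hS : 0 < S := by positivity
  set u := phase ⟪v₁, y⟫_ℂ • v₁ + phase ⟪v₂, y⟫_ℂ • v₂
  have hu : ‖u‖ ^ 2 ≤ 2 * S := norm_smul_add_smul_sq_le hnorm (norm_phase _) (norm_phase _)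
  have huy : ‖⟪v₁, y⟫_ℂ‖ + ‖⟪v₂, y⟫_ℂ‖ ≤ ‖u‖ * ‖y‖ := norm_inner_add_norm_inner_le y
  have hy₀ : 0 < ‖y‖ ^ 2 := by rw [hy]; positivity
  have huy_le : (‖u‖ * ‖y‖) ^ 2 ≤ 2 ^ 2 := by
    rw [mul_pow, hy]
    calc ‖u‖ ^ 2 * (2 / S) ≤ 2 * S * (2 / S) := by gcongr
      _ = 2 ^ 2 := by field_simp
  have huy_eq : ‖u‖ * ‖y‖ = 2 := by
    nlinarith [abs_le_of_sq_le_sq' huy_le zero_le_two]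
  have hu_eq : ‖u‖ ^ 2 = 2 * S := by
    refine mul_right_cancel₀ hy₀.ne' ?_
    rw [← mul_pow, huy_eq, hy]
    field_simp
  have hCS : ‖⟪u, y⟫_ℂ‖ = ‖u‖ * ‖y‖ := by
    rw [inner_phase_smul_add_phase_smul, Complex.norm_real, Real.norm_of_nonneg (by positivity)]
    linarith
  have hu₀ : u ≠ 0 := by
    rintro hu₀
    rw [hu₀, norm_zero] at hu_eq
    linarith
  have hy₀' : y ≠ 0 := by
    rintro rfl
    norm_num at h₁
  have hu_w : u = phase ⟪v₂, y⟫_ℂ • (φ • v₁ + v₂) :=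
    smul_add_smul_eq_smul_of_norm_sq_eq hnorm (norm_phase _) (norm_phase _) hφ hv hm hu_eq
  obtain ⟨r, -, hr⟩ := (norm_inner_eq_norm_iff hu₀ hy₀').mp hCS
  exact ⟨r * phase ⟪v₂, y⟫_ℂ, hr.trans (by rw [hu_w, smul_smul])⟩

end

-- The paper's inner product `⟨x, y⟩` is Mathlib's `⟪y, x⟫_ℂ`.
theorem hilbert_two_constraint_min_general
    {H : Type*} [NormedAddCommGroup H] [InnerProductSpace ℂ H]
    (v₁ v₂ : H) (hv₁ : v₁ ≠ 0) (hnorm : ‖v₁‖ = ‖v₂‖) :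
    IsLeast ((fun x => ‖x‖) ''
        {x : H | 1 ≤ ‖⟪v₁, x⟫_ℂ‖ ∧ 1 ≤ ‖⟪v₂, x⟫_ℂ‖})
      (Real.sqrt (2 / (‖v₁‖ ^ 2 + ‖⟪v₂, v₁⟫_ℂ‖))) ∧
    (⟪v₂, v₁⟫_ℂ ≠ 0 → ∀ α : ℝ,
      ⟪v₂, v₁⟫_ℂ = Complex.exp (-Complex.I * α) * (‖⟪v₂, v₁⟫_ℂ‖ : ℂ) →
      ∀ y : H, 1 ≤ ‖⟪v₁, y⟫_ℂ‖ → 1 ≤ ‖⟪v₂, y⟫_ℂ‖ →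
        ‖y‖ = Real.sqrt (2 / (‖v₁‖ ^ 2 + ‖⟪v₂, v₁⟫_ℂ‖)) →
        ∃ c : ℂ, ‖c‖ = 1 ∧
          y = (((Real.sqrt (2 / (‖v₁‖ ^ 2 + ‖⟪v₂, v₁⟫_ℂ‖)) /
              ‖Complex.exp (Complex.I * α) • v₁ + v₂‖ : ℝ) : ℂ) * c) •
            (Complex.exp (Complex.I * α) • v₁ + v₂)) := by
  rw [norm_inner_symm v₂ v₁]
  refine ⟨⟨?_, ?_⟩, fun hv₀ α hα y h₁ h₂ hy => ?_⟩
  · obtain ⟨x, h₁, h₂, hx⟩ := exists_one_le_norm_inner_and_norm_eq hnorm hv₁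
    exact ⟨x, ⟨h₁, h₂⟩, hx⟩
  · rintro _ ⟨x, ⟨h₁, h₂⟩, rfl⟩
    exact sqrt_two_div_le_norm hnorm hv₁ h₁ h₂
  · have hv : ⟪v₁, v₂⟫_ℂ = Complex.exp (Complex.I * α) * ‖⟪v₁, v₂⟫_ℂ‖ := by
      rw [← inner_conj_symm, hα, map_mul, ← Complex.exp_conj]
      simp
    obtain ⟨d, rfl⟩ := exists_eq_smul_of_norm_sq_eq hnorm (by simp) hv
      (by rwa [← inner_conj_symm, map_ne_zero]) h₁ h₂ (by rw [hy, Real.sq_sqrt]; positivity)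
    rw [← hy]
    exact exists_norm_eq_one_smul_eq_norm_div_norm_smul d _

/-- The geometric lemma on minimal norm vectors with two inner product constraints.
Here the paper's inner product `⟨x,y⟩` (linear in the first variable, conjugate-linear in
the second) corresponds to Mathlib's `⟪y, x⟫_ℂ`. -/
theorem hilbert_two_constraint_min
    {H : Type*} [NormedAddCommGroup H] [InnerProductSpace ℂ H] [CompleteSpace H]
    (v₁ v₂ : H) (hv₁ : v₁ ≠ 0) (hv₂ : v₂ ≠ 0) (hnorm : ‖v₁‖ = ‖v₂‖) :
    IsLeast ((fun x => ‖x‖) ''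
        {x : H | 1 ≤ ‖⟪v₁, x⟫_ℂ‖ ∧ 1 ≤ ‖⟪v₂, x⟫_ℂ‖})
      (Real.sqrt (2 / (‖v₁‖ ^ 2 + ‖⟪v₂, v₁⟫_ℂ‖))) ∧
    (⟪v₂, v₁⟫_ℂ ≠ 0 → ∀ α : ℝ,
      ⟪v₂, v₁⟫_ℂ = Complex.exp (-Complex.I * α) * (‖⟪v₂, v₁⟫_ℂ‖ : ℂ) →
      ∀ y : H, 1 ≤ ‖⟪v₁, y⟫_ℂ‖ → 1 ≤ ‖⟪v₂, y⟫_ℂ‖ →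
        ‖y‖ = Real.sqrt (2 / (‖v₁‖ ^ 2 + ‖⟪v₂, v₁⟫_ℂ‖)) →
        ∃ c : ℂ, ‖c‖ = 1 ∧
          y = (((Real.sqrt (2 / (‖v₁‖ ^ 2 + ‖⟪v₂, v₁⟫_ℂ‖)) /
              ‖Complex.exp (Complex.I * α) • v₁ + v₂‖ : ℝ) : ℂ) * c) •
            (Complex.exp (Complex.I * α) • v₁ + v₂)) :=
  hilbert_two_constraint_min_general v₁ v₂ hv₁ hnorm
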